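/- arXiv:1806.02812 — 2 statements merged into one kernel-verified Lean document; each statement's English description precedes it below -/
import Mathlib

section
/- Let a, b, c be nonnegative reals and A ∈ [0, π] be such that cosh a = cosh b · cosh c − sinh b · sinh c · cos A, and assume b ≤ 1/4 and c ≥ 1/2. Let ā ≥ 0 be defined by ā² = b² + c² − 2 b c cos A. Then a² ≤ (1 + 2 b²) ā². -/
/-!
Put `d = c - b`, `u = 1 - cos A ∈ [0, 2]` and `k = √(1 + 2 b²)`. Then
`cosh a = cosh d + sinh b sinh c · u` and `ā² = d² + 2 b c · u`, and it suffices to show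
`cosh a ≤ cosh (k ā)`. Convexity of `s ↦ cosh √s` gives
`cosh (k ā) - cosh (k d) ≥ k² (ā² - d²) sinh (k d) / (2 k d)`, and `sinh (k d) ≥ k sinh d`, so
`2 d (cosh (k ā) - cosh (k d)) ≥ (1 + 2 b²) · 2 b c u · sinh d`. This falls short of
`2 d sinh b sinh c · u` by at most the reserve
`2 d (cosh (k d) - cosh d) ≥ 2 (k - 1) d² sinh d ≥ (48/25) b² d² sinh d`. Everything is affine
in `u`, so only `u = 2` needs checking, and there the inequality follows from third-order
Taylor bounds for `sinh` and `cosh`, using `b ≤ 1/4` and `d ≥ 1/4`.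
-/

open Real Set

lemma nonneg_of_hasDerivAt_nonneg_of_map_zero {f f' : ℝ → ℝ}
    (hf : ∀ x, HasDerivAt f (f' x) x) (hf' : ∀ x, 0 < x → 0 ≤ f' x) (h0 : f 0 = 0)
    {x : ℝ} (hx : 0 ≤ x) : 0 ≤ f x := by
  have hmono : MonotoneOn f (Ici 0) :=
    monotoneOn_of_hasDerivWithinAt_nonneg (convex_Ici 0)
      (fun y _ ↦ (hf y).continuousAt.continuousWithinAt)
      (fun y _ ↦ (hf y).hasDerivWithinAt)
      (fun y hy ↦ hf' y (by simpa using hy))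
  simpa [h0] using hmono self_mem_Ici hx hx

namespace Real

variable {x y : ℝ}

lemma sinh_le_mul_cosh (hx : 0 ≤ x) : sinh x ≤ x * cosh x := by
  have := nonneg_of_hasDerivAt_nonneg_of_map_zero (f := fun t ↦ t * cosh t - sinh t)
    (fun t ↦ ((hasDerivAt_id' t).mul (hasDerivAt_cosh t)).sub (hasDerivAt_sinh t)
      |>.congr_deriv (by ring))
    (fun t ht ↦ mul_nonneg ht.le (sinh_nonneg_iff.2 ht.le)) (by simp) hx
  linarith

lemma cosh_sub_one_le (x : ℝ) : cosh x - 1 ≤ x ^ 2 / 2 * cosh x := by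
  wlog hx : 0 ≤ x generalizing x
  · simpa using this (-x) (by linarith)
  have hhalf : sinh (x / 2) ≤ x / 2 * cosh (x / 2) := sinh_le_mul_cosh (by linarith)
  have hsq : sinh (x / 2) ^ 2 ≤ (x / 2 * cosh (x / 2)) ^ 2 :=
    pow_le_pow_left₀ (sinh_nonneg_iff.2 (by linarith)) hhalf 2
  have hx2 : cosh x = cosh (x / 2) ^ 2 + sinh (x / 2) ^ 2 := by
    rw [← cosh_two_mul, mul_div_cancel₀ x two_ne_zero]
  nlinarith [cosh_sq (x / 2), sq_nonneg x, one_le_cosh x]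

lemma sinh_le_add_cube_mul_cosh (hx : 0 ≤ x) : sinh x ≤ x + x ^ 3 / 6 * cosh x := by
  have := nonneg_of_hasDerivAt_nonneg_of_map_zero
    (f := fun t ↦ t + t ^ 3 / 6 * cosh t - sinh t)
    (f' := fun t ↦ t ^ 2 / 2 * cosh t + t ^ 3 / 6 * sinh t - (cosh t - 1))
    (fun t ↦ ((hasDerivAt_id' t).add (((hasDerivAt_pow 3 t).div_const 6).mul
      (hasDerivAt_cosh t))).sub (hasDerivAt_sinh t) |>.congr_deriv (by push_cast; ring))
    (fun t ht ↦ by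
      nlinarith [cosh_sub_one_le t, sinh_nonneg_iff.2 ht.le, pow_nonneg ht.le 3])
    (by simp) hx
  linarith

lemma mul_cosh_le_mul_sinh (hx : 0 ≤ x) : 3 * x * cosh x ≤ (3 + x ^ 2) * sinh x := by
  have := nonneg_of_hasDerivAt_nonneg_of_map_zero
    (f := fun t ↦ (3 + t ^ 2) * sinh t - 3 * (t * cosh t))
    (f' := fun t ↦ t * (t * cosh t - sinh t))
    (fun t ↦ (((hasDerivAt_pow 2 t).const_add 3).mul (hasDerivAt_sinh t)).sub
      (((hasDerivAt_id' t).mul (hasDerivAt_cosh t)).const_mul 3) |>.congr_deriv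
        (by push_cast; ring))
    (fun t ht ↦ mul_nonneg ht.le (sub_nonneg.2 (sinh_le_mul_cosh ht.le))) (by simp) hx
  linarith

lemma mul_sinh_le_mul_sinh (hx : 0 ≤ x) (hxy : x ≤ y) : y * sinh x ≤ x * sinh y := by
  have hadd : sinh y = sinh x * cosh (y - x) + cosh x * sinh (y - x) := by
    rw [← sinh_add, add_sub_cancel]
  have h1 := one_le_cosh (y - x)
  have h2 : y - x ≤ sinh (y - x) := self_le_sinh_iff.2 (by linarith)
  have h3 : 0 ≤ sinh x := sinh_nonneg_iff.2 hx
  have h4 := sinh_le_mul_cosh hx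
  nlinarith [mul_nonneg (mul_nonneg hx h3) (sub_nonneg.2 h1),
    mul_nonneg (sub_nonneg.2 h4) (by linarith : 0 ≤ sinh (y - x)),
    mul_nonneg h3 (sub_nonneg.2 h2)]

lemma mul_sinh_le_sinh_mul {k : ℝ} (hk : 1 ≤ k) (hx : 0 ≤ x) : k * sinh x ≤ sinh (k * x) := by
  rcases hx.eq_or_lt with rfl | hx
  · simp
  have := mul_sinh_le_mul_sinh hx.le (le_mul_of_one_le_left hx.le hk)
  nlinarith

lemma sub_mul_sinh_le_cosh_sub_cosh (hx : 0 ≤ x) (hxy : x ≤ y) :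
    (y - x) * sinh x ≤ cosh y - cosh x := by
  have hadd : cosh y = cosh x * cosh (y - x) + sinh x * sinh (y - x) := by
    rw [← cosh_add, add_sub_cancel]
  have h1 := one_le_cosh (y - x)
  have h2 : y - x ≤ sinh (y - x) := self_le_sinh_iff.2 (by linarith)
  nlinarith [mul_nonneg (cosh_pos x).le (sub_nonneg.2 h1),
    mul_nonneg (sinh_nonneg_iff.2 hx) (sub_nonneg.2 h2)]

lemma cosh_sub_cosh (x y : ℝ) :
    cosh y - cosh x = 2 * sinh ((y + x) / 2) * sinh ((y - x) / 2) := by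
  have h1 := cosh_add ((y + x) / 2) ((y - x) / 2)
  have h2 := cosh_sub ((y + x) / 2) ((y - x) / 2)
  rw [show (y + x) / 2 + (y - x) / 2 = y by ring] at h1
  rw [show (y + x) / 2 - (y - x) / 2 = x by ring] at h2
  linarith

/-- Convexity of `s ↦ cosh √s`: its slope on `[x², y²]` is at least its derivative
`sinh x / (2 x)` at `x²`. -/
lemma sinh_mul_sq_sub_sq_le (hx : 0 ≤ x) (hxy : x ≤ y) :
    sinh x * (y ^ 2 - x ^ 2) ≤ 2 * x * (cosh y - cosh x) := by
  have hq : 0 ≤ (y - x) / 2 := by linarith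
  have hm := mul_sinh_le_mul_sinh hx (by linarith : x ≤ (y + x) / 2)
  have h1 := sinh_nonneg_iff.2 hq
  have h2 : (y - x) / 2 ≤ sinh ((y - x) / 2) := self_le_sinh_iff.2 hq
  have h3 := sinh_nonneg_iff.2 hx
  rw [cosh_sub_cosh]
  nlinarith [mul_nonneg h1 (sub_nonneg.2 hm),
    mul_nonneg (mul_nonneg (by linarith : 0 ≤ (y + x) / 2) h3) (sub_nonneg.2 h2)]

lemma sq_mul_sq_sub_sq_mul_sinh_le {k : ℝ} (hk : 1 ≤ k) (hx : 0 ≤ x) (hxy : x ≤ y) :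
    k ^ 2 * (y ^ 2 - x ^ 2) * sinh x ≤ 2 * x * (cosh (k * y) - cosh (k * x)) := by
  have hkx : 0 ≤ k * x := by positivity
  have hslope := sinh_mul_sq_sub_sq_le hkx (mul_le_mul_of_nonneg_left hxy (by linarith))
  have hscale := mul_sinh_le_sinh_mul hk hx
  have hsq : 0 ≤ y ^ 2 - x ^ 2 := by nlinarith
  refine le_of_mul_le_mul_left ?_ (by linarith : 0 < k)
  calc k * (k ^ 2 * (y ^ 2 - x ^ 2) * sinh x)
      = k * sinh x * (k ^ 2 * (y ^ 2 - x ^ 2)) := by ring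
    _ ≤ sinh (k * x) * ((k * y) ^ 2 - (k * x) ^ 2) := by
        rw [show (k * y) ^ 2 - (k * x) ^ 2 = k ^ 2 * (y ^ 2 - x ^ 2) by ring]
        exact mul_le_mul_of_nonneg_right hscale (by positivity)
    _ ≤ 2 * (k * x) * (cosh (k * y) - cosh (k * x)) := hslope
    _ = k * (2 * x * (cosh (k * y) - cosh (k * x))) := by ring

lemma sinh_two_mul_le {b : ℝ} (hb : 0 ≤ b) (hb4 : b ≤ 1 / 4) :
    sinh (2 * b) ≤ 2 * b + 32 / 21 * b ^ 3 := by
  have hcosh : cosh (2 * b) ≤ 8 / 7 := by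
    nlinarith [cosh_sub_one_le (2 * b), mul_le_mul_of_nonneg_right
      (by nlinarith : (2 * b) ^ 2 ≤ 1 / 4) (cosh_pos (2 * b)).le]
  nlinarith [sinh_le_add_cube_mul_cosh (by linarith : 0 ≤ 2 * b), pow_nonneg hb 3]

lemma sinh_sq_le {b : ℝ} (hb : 0 ≤ b) (hb4 : b ≤ 1 / 4) :
    sinh b ^ 2 ≤ b ^ 2 + 7 / 20 * b ^ 4 := by
  have hcosh : cosh b ≤ 32 / 31 := by
    nlinarith [cosh_sub_one_le b, mul_le_mul_of_nonneg_right
      (by nlinarith : b ^ 2 ≤ 1 / 16) (cosh_pos b).le]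
  have hsinh : sinh b ≤ b + 16 / 93 * b ^ 3 := by
    nlinarith [sinh_le_add_cube_mul_cosh hb, pow_nonneg hb 3]
  have hb2 : b ^ 2 ≤ 1 / 16 := by nlinarith
  nlinarith [pow_le_pow_left₀ (sinh_nonneg_iff.2 hb) hsinh 2,
    mul_le_mul_of_nonneg_left hb2 (pow_nonneg hb 4)]

lemma two_mul_mul_sinh_mul_sinh_add_le {b d : ℝ} (hb : 0 ≤ b) (hb4 : b ≤ 1 / 4)
    (hd : 1 / 4 ≤ d) :
    2 * d * (sinh b * sinh (b + d))
      ≤ (2 * (1 + 2 * b ^ 2) * b * (b + d) + 24 / 25 * b ^ 2 * d ^ 2) * sinh d := by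
  have hcoshd : d * cosh d ≤ (1 + d ^ 2 / 3) * sinh d := by
    nlinarith [mul_cosh_le_mul_sinh (by linarith : 0 ≤ d)]
  have hsinh2 : 2 * sinh b * cosh b ≤ 2 * b + 32 / 21 * b ^ 3 := by
    simpa [sinh_two_mul] using sinh_two_mul_le hb hb4
  have hpoly : 2 * (b ^ 2 + 7 / 20 * b ^ 4) * (1 + d ^ 2 / 3) + (2 * b + 32 / 21 * b ^ 3) * d
      ≤ 2 * (1 + 2 * b ^ 2) * b * (b + d) + 24 / 25 * b ^ 2 * d ^ 2 := by
    have h0 : 0 ≤ 22 / 75 - 7 / 30 * b ^ 2 := by nlinarith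
    nlinarith [mul_nonneg (mul_nonneg (sq_nonneg b) (sq_nonneg d)) h0, pow_nonneg hb 4,
      mul_nonneg (pow_nonneg hb 3) (by linarith : 0 ≤ d)]
  calc 2 * d * (sinh b * sinh (b + d))
      = 2 * sinh b ^ 2 * (d * cosh d) + 2 * sinh b * cosh b * d * sinh d := by
        rw [sinh_add]; ring
    _ ≤ 2 * sinh b ^ 2 * ((1 + d ^ 2 / 3) * sinh d)
          + (2 * b + 32 / 21 * b ^ 3) * d * sinh d := by
        gcongr
    _ ≤ 2 * (b ^ 2 + 7 / 20 * b ^ 4) * ((1 + d ^ 2 / 3) * sinh d)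
          + (2 * b + 32 / 21 * b ^ 3) * d * sinh d := by
        gcongr
        exact sinh_sq_le hb hb4
    _ = (2 * (b ^ 2 + 7 / 20 * b ^ 4) * (1 + d ^ 2 / 3) + (2 * b + 32 / 21 * b ^ 3) * d)
          * sinh d := by ring
    _ ≤ _ := by gcongr

lemma cosh_mul_cosh_sub_sinh_mul_sinh_mul_le {b c t e k : ℝ} (hb : 0 ≤ b) (hb4 : b ≤ 1 / 4)
    (hc : b + 1 / 4 ≤ c) (ht₀ : -1 ≤ t) (ht₁ : t ≤ 1) (he : 0 ≤ e)
    (he2 : e ^ 2 = b ^ 2 + c ^ 2 - 2 * b * c * t) (hk : 0 ≤ k) (hk2 : k ^ 2 = 1 + 2 * b ^ 2) :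
    cosh b * cosh c - sinh b * sinh c * t ≤ cosh (k * e) := by
  obtain ⟨d, rfl⟩ : ∃ d, c = b + d := ⟨c - b, by ring⟩
  have hd : 1 / 4 ≤ d := by linarith
  have hk1 : 1 ≤ k := by nlinarith
  have hk13 : k ≤ 13 / 12 := by nlinarith
  -- `k - 1 = 2 b² / (k + 1)` and `k + 1 ≤ 25 / 12`
  have hkb : 24 / 25 * b ^ 2 ≤ k - 1 := by
    nlinarith [mul_le_mul_of_nonneg_left hk13 (by linarith : 0 ≤ k - 1)]
  have hu₀ : 0 ≤ 1 - t := by linarith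
  have he2' : e ^ 2 - d ^ 2 = 2 * b * (b + d) * (1 - t) := by rw [he2]; ring
  have hde : d ≤ e := by nlinarith [mul_nonneg (mul_nonneg hb (by linarith : 0 ≤ b + d)) hu₀]
  have hgrow := sq_mul_sq_sub_sq_mul_sinh_le hk1 (by linarith) hde
  rw [hk2, he2'] at hgrow
  have hreserve := sub_mul_sinh_le_cosh_sub_cosh (by linarith : 0 ≤ d)
    (le_mul_of_one_le_left (by linarith) hk1)
  have hend := two_mul_mul_sinh_mul_sinh_add_le hb hb4 hd
  -- affine in `1 - t ∈ [0, 2]`, so the endpoint `t = -1`, which is `hend`, suffices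
  have hlin : d * (sinh b * sinh (b + d)) * (1 - t)
      ≤ (1 + 2 * b ^ 2) * b * (b + d) * sinh d * (1 - t) + 24 / 25 * b ^ 2 * d ^ 2 * sinh d := by
    nlinarith [mul_nonneg hu₀ (by linarith : 0 ≤ (2 * (1 + 2 * b ^ 2) * b * (b + d)
        + 24 / 25 * b ^ 2 * d ^ 2) * sinh d - 2 * d * (sinh b * sinh (b + d))),
      mul_nonneg (by linarith : 0 ≤ 1 + t) (by positivity : 0 ≤ b ^ 2 * d ^ 2 * sinh d)]
  have hcoshd : cosh d = cosh (b + d) * cosh b - sinh (b + d) * sinh b := by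
    rw [← cosh_sub, add_sub_cancel_left]
  refine le_of_mul_le_mul_left ?_ (by linarith : 0 < 2 * d)
  calc 2 * d * (cosh b * cosh (b + d) - sinh b * sinh (b + d) * t)
      = 2 * d * cosh d + 2 * (d * (sinh b * sinh (b + d)) * (1 - t)) := by
        rw [hcoshd]; ring
    _ ≤ 2 * d * cosh d + (1 + 2 * b ^ 2) * (2 * b * (b + d) * (1 - t)) * sinh d
          + 2 * d * ((k * d - d) * sinh d) := by
        nlinarith [mul_le_mul_of_nonneg_right hkb (by positivity : 0 ≤ 2 * d ^ 2 * sinh d)]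
    _ ≤ 2 * d * cosh d + 2 * d * (cosh (k * e) - cosh (k * d))
          + 2 * d * (cosh (k * d) - cosh d) := by
        gcongr
    _ = 2 * d * cosh (k * e) := by ring

end Real

theorem hyperbolic_distortion_large_c_general
    (a b c A : ℝ) (hb : 0 ≤ b)
    (hlaw : Real.cosh a = Real.cosh b * Real.cosh c
        - Real.sinh b * Real.sinh c * Real.cos A)
    (hb4 : b ≤ 1 / 4) (hc2 : 1 / 2 ≤ c)
    (abar : ℝ)
    (habar2 : abar ^ 2 = b ^ 2 + c ^ 2 - 2 * b * c * Real.cos A) :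
    a ^ 2 ≤ (1 + 2 * b ^ 2) * abar ^ 2 := by
  have hk2 : √(1 + 2 * b ^ 2) ^ 2 = 1 + 2 * b ^ 2 := sq_sqrt (by positivity)
  have hcosh : cosh a ≤ cosh (√(1 + 2 * b ^ 2) * |abar|) :=
    hlaw ▸ cosh_mul_cosh_sub_sinh_mul_sinh_mul_le hb hb4 (by linarith) (neg_one_le_cos A)
      (cos_le_one A) (abs_nonneg abar) (by rw [sq_abs, habar2]) (sqrt_nonneg _) hk2
  calc a ^ 2 ≤ (√(1 + 2 * b ^ 2) * |abar|) ^ 2 := sq_le_sq.2 (by simpa using hcosh)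
    _ = (1 + 2 * b ^ 2) * abar ^ 2 := by rw [mul_pow, hk2, sq_abs]

theorem hyperbolic_distortion_large_c
    (a b c A : ℝ) (ha : 0 ≤ a) (hb : 0 ≤ b) (hc : 0 ≤ c)
    (hA : A ∈ Set.Icc (0 : ℝ) Real.pi)
    (hlaw : Real.cosh a = Real.cosh b * Real.cosh c
        - Real.sinh b * Real.sinh c * Real.cos A)
    (hb4 : b ≤ 1 / 4) (hc2 : 1 / 2 ≤ c)
    (abar : ℝ) (habar : 0 ≤ abar)
    (habar2 : abar ^ 2 = b ^ 2 + c ^ 2 - 2 * b * c * Real.cos A) :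
    a ^ 2 ≤ (1 + 2 * b ^ 2) * abar ^ 2 :=
  hyperbolic_distortion_large_c_general a b c A hb hlaw hb4 hc2 abar habar2
end

section
/- For all natural numbers p and q with p ≥ q, (2p + 2q + 2)! / ((2p+1)! · (2q+1)!) = ∑_{k=0}^{q} ( (p+q+1)! / ((p−k)! · (q−k)! · (2k+1)!) ) · 2^{2k+1}. Equivalently, the binomial coefficient C(2p+2q+2, 2q+1) equals the sum over k = 0, …, q of the multinomial coefficient (p+q+1 choose p−k, q−k, 2k+1) times 2·4^k. -/
/-!
Split `2n` objects into `n` pairs. A choice of `m` of them meets some `j` pairs, `m - j` of them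
in both elements, which is the expansion `(X + 1) ^ (2 * n) = (X * (X + 2) + 1) ^ n`. For
`m = 2 * q + 1` and `n = p + q + 1` the pairs met in exactly one element are odd in number,
`2 * k + 1`, leaving `q - k` full pairs and `p - k` untouched ones.
-/

open Nat Finset Polynomial

theorem choose_two_mul_eq_sum (n m : ℕ) :
    (2 * n).choose m = ∑ j ∈ range (m + 1), n.choose j * j.choose (m - j) * 2 ^ (2 * j - m) := by
  set g : ℕ → ℕ := fun j ↦ if j ≤ m then n.choose j * j.choose (m - j) * 2 ^ (2 * j - m) else 0
  have hpair : (X + 1 : ℕ[X]) ^ (2 * n) = (X * (X + C 2) + 1) ^ n := by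
    rw [pow_mul, C_ofNat]; ring
  have hcoeff (j : ℕ) :
      ((X * (X + C 2)) ^ j * 1 ^ (n - j) * (n.choose j : ℕ[X])).coeff m = g j := by
    rw [one_pow, mul_one, coeff_mul_natCast, mul_pow, coeff_X_pow_mul']
    simp only [g]
    split_ifs with hj
    · rw [coeff_X_add_C_pow, Nat.cast_id, Nat.cast_id, show j - (m - j) = 2 * j - m by omega]
      ring
    · rw [zero_mul]
  calc (2 * n).choose m
      = ∑ j ∈ range (n + 1), g j := by
        rw [← Nat.cast_id ((2 * n).choose m), ← coeff_X_add_one_pow ℕ, hpair, add_pow, finsetSum_coeff]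
        exact sum_congr rfl fun j _ ↦ hcoeff j
    _ = ∑ j ∈ range (n + m + 1), g j := by
        refine sum_subset (range_subset_range.2 (by omega)) fun j _ hj ↦ ?_
        simp only [g, choose_eq_zero_of_lt (show n < j by simpa using hj), zero_mul, ite_self]
    _ = ∑ j ∈ range (m + 1), g j := by
        refine (sum_subset (range_subset_range.2 (by omega)) fun j _ hj ↦ ?_).symm
        exact if_neg (by simpa using hj)
    _ = _ := sum_congr rfl fun j hj ↦ if_pos (Nat.lt_succ_iff.1 (mem_range.1 hj))

theorem choose_two_mul_odd (n q : ℕ) :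
    (2 * n).choose (2 * q + 1) = ∑ k ∈ range (q + 1),
      n.choose (q + 1 + k) * (q + 1 + k).choose (q - k) * 2 ^ (2 * k + 1) := by
  rw [choose_two_mul_eq_sum, show 2 * q + 1 + 1 = (q + 1) + (q + 1) by ring, sum_range_add,
    sum_eq_zero fun j hj ↦ ?_, zero_add]
  · refine sum_congr rfl fun k hk ↦ ?_
    rw [show 2 * q + 1 - (q + 1 + k) = q - k by omega,
      show 2 * (q + 1 + k) - (2 * q + 1) = 2 * k + 1 by omega]
  · rw [choose_eq_zero_of_lt (n := j) (by simp at hj; omega), mul_zero, zero_mul]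

theorem cast_choose_mul_choose (K : Type*) [Field K] [CharZero K] {i j n : ℕ} (hij : i ≤ j)
    (hjn : j ≤ n) :
    ((n.choose j * j.choose i : ℕ) : K) = n ! / ((n - j)! * i ! * (j - i)!) := by
  have hj : (j ! : K) ≠ 0 := Nat.cast_ne_zero.2 j.factorial_ne_zero
  rw [Nat.cast_mul, Nat.cast_choose K hjn, Nat.cast_choose K hij]
  field_simp

theorem multinomial_identity_odd (p q : ℕ) (hpq : q ≤ p) :
    ((2 * p + 2 * q + 2)! : ℚ) / ((2 * p + 1)! * (2 * q + 1)!)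
      = ∑ k ∈ Finset.range (q + 1),
          ((p + q + 1)! : ℚ) / ((p - k)! * (q - k)! * (2 * k + 1)!)
            * 2 ^ (2 * k + 1) := by
  have hlhs : ((2 * p + 2 * q + 2)! : ℚ) / ((2 * p + 1)! * (2 * q + 1)!)
      = ((2 * (p + q + 1)).choose (2 * q + 1) : ℚ) := by
    rw [Nat.cast_choose ℚ (by omega), show 2 * (p + q + 1) - (2 * q + 1) = 2 * p + 1 by omega,
      mul_comm ((2 * q + 1)! : ℚ)]
    ring_nf
  rw [hlhs, choose_two_mul_odd, Nat.cast_sum]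
  refine sum_congr rfl fun k hk ↦ ?_
  have hkq : k ≤ q := Nat.lt_succ_iff.1 (mem_range.1 hk)
  rw [Nat.cast_mul, cast_choose_mul_choose ℚ (by omega) (by omega),
    show p + q + 1 - (q + 1 + k) = p - k by omega, show q + 1 + k - (q - k) = 2 * k + 1 by omega]
  push_cast
  ring
end
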